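/- arXiv:2006.03553 — 7 statements merged into one kernel-verified Lean document; each statement's English description precedes it below -/
import Mathlib

section
/- For any deterministic team optimal policy π† of a cooperative Markov decision process with K agents, defining q^{k,⋆}(s,a^k) = q†(s, a^k, a^{-k}) where a^{-k} are the actions of the other agents under π†, it holds that max_{a^k} q^{k,⋆}(s,a^k) = max_{ā} q†(s,ā) for every agent k and state s. -/
open Function

theorem ciSup_update_eq_of_forall_le {ι : Type*} [DecidableEq ι] {A : ι → Type*}
    {α : Type*} [ConditionallyCompleteLattice α] {f : (∀ i, A i) → α} {x : ∀ i, A i}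
    (hx : ∀ a, f a ≤ f x) (k : ι) :
    ⨆ b : A k, f (update x k b) = f x :=
  haveI : Nonempty (A k) := ⟨x k⟩
  ciSup_eq_of_forall_le_of_forall_lt_exists_gt (fun b => hx _)
    fun _ hw => ⟨x k, by rwa [update_eq_self]⟩

theorem stmt0_general
    {S : Type}
    {K : ℕ} {A : Fin K → Type} [∀ k, Fintype (A k)]
    (qd : S → ((k : Fin K) → A k) → ℝ)
    (π : S → (k : Fin K) → A k)
    (hopt : ∀ s, qd s (π s) = ⨆ a : (k : Fin K) → A k, qd s a)
    (qstar : (k : Fin K) → S → A k → ℝ)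
    (hdef : ∀ k s a, qstar k s a = qd s (Function.update (π s) k a)) :
    ∀ (k : Fin K) (s : S),
      (⨆ a : A k, qstar k s a) = ⨆ a : (k : Fin K) → A k, qd s a := by
  intro k s
  have hmax : ∀ a, qd s a ≤ qd s (π s) :=
    fun a => hopt s ▸ le_ciSup (Set.finite_range _).bddAbove a
  simp only [hdef]
  rw [ciSup_update_eq_of_forall_le hmax, hopt]

/-- For any deterministic team optimal policy π† of a cooperative MDP with K
agents, with q^{k,⋆}(s,a^k) = q†(s, a^k, a^{-k}) where a^{-k} are the other agents' actions
under π†, we have max_{a^k} q^{k,⋆}(s,a^k) = max_{ā} q†(s,ā) for every agent k and state s. -/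
theorem stmt0
    {S : Type} [Fintype S] [Nonempty S]
    {K : ℕ} {A : Fin K → Type} [∀ k, Fintype (A k)] [∀ k, Nonempty (A k)]
    (qd : S → ((k : Fin K) → A k) → ℝ)
    (π : S → (k : Fin K) → A k)
    (hopt : ∀ s, qd s (π s) = ⨆ a : (k : Fin K) → A k, qd s a)
    (qstar : (k : Fin K) → S → A k → ℝ)
    (hdef : ∀ k s a, qstar k s a = qd s (Function.update (π s) k a)) :
    ∀ (k : Fin K) (s : S),
      (⨆ a : A k, qstar k s a) = ⨆ a : (k : Fin K) → A k, qd s a :=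
  stmt0_general qd π hopt qstar hdef
end

section
/- With q^{k,⋆} defined as the restriction of q† along a deterministic team optimal policy, the factored functions satisfy the fixed-point equation q^{k,⋆}(s,a^k) = r(s, a^k, a^{-k,⋆}(s)) + γ E_{s'} [ max_{a'} q^{k,⋆}(s', a') ], where a^{-k,⋆}(s) denotes the actions of the other agents prescribed by the optimal policy at s. -/
open Function Set

theorem ciSup_update_eq_ciSup_of_apply_eq_ciSup {α : Type*} [ConditionallyCompleteLattice α]
    {ι : Type*} [DecidableEq ι] {A : ι → Type*} {f : (∀ i, A i) → α} (hf : BddAbove (range f))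
    {x : ∀ i, A i} (hx : f x = ⨆ y, f y) (k : ι) :
    ⨆ a, f (update x k a) = ⨆ y, f y := by
  have : Nonempty (A k) := ⟨x k⟩
  refine le_antisymm (ciSup_le fun a => le_ciSup hf _) ?_
  calc ⨆ y, f y = f (update x k (x k)) := by rw [update_eq_self, hx]
    _ ≤ ⨆ a, f (update x k a) :=
      le_ciSup (hf.mono (range_comp_subset_range _ f)) (x k)

theorem stmt1_general
    {S : Type} [Fintype S]
    {K : ℕ} {A : Fin K → Type} [∀ k, Fintype (A k)]
    (r : S → ((k : Fin K) → A k) → ℝ)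
    (P : S → ((k : Fin K) → A k) → S → ℝ)
    (γ : ℝ)
    (qd : S → ((k : Fin K) → A k) → ℝ)
    (hBellman : ∀ s aj, qd s aj
      = r s aj + γ * ∑ s', (P s aj s' * (⨆ aj' : (k : Fin K) → A k, qd s' aj')))
    (π : S → (k : Fin K) → A k)
    (hopt : ∀ s, qd s (π s) = ⨆ aj : (k : Fin K) → A k, qd s aj)
    (qstar : (k : Fin K) → S → A k → ℝ)
    (hdef : ∀ k s a, qstar k s a = qd s (Function.update (π s) k a)) :
    ∀ (k : Fin K) (s : S) (a : A k),
      qstar k s a = r s (Function.update (π s) k a)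
        + γ * ∑ s', (P s (Function.update (π s) k a) s' * (⨆ a' : A k, qstar k s' a')) := by
  intro k s a
  have hsup : ∀ s', ⨆ a', qstar k s' a' = ⨆ aj, qd s' aj := fun s' => by
    simp only [hdef]
    exact ciSup_update_eq_ciSup_of_apply_eq_ciSup (finite_range _).bddAbove (hopt s') k
  rw [hdef, hBellman]
  simp only [hsup]

/-- With q^{k,⋆} the restriction of q† along a deterministic team optimal
policy, the factored functions satisfy the fixed-point equation
q^{k,⋆}(s,a^k) = r(s, a^k, a^{-k,⋆}(s)) + γ E_{s'} [ max_{a'} q^{k,⋆}(s', a') ]. -/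
theorem stmt1
    {S : Type} [Fintype S] [Nonempty S]
    {K : ℕ} {A : Fin K → Type} [∀ k, Fintype (A k)] [∀ k, Nonempty (A k)]
    (r : S → ((k : Fin K) → A k) → ℝ)
    (P : S → ((k : Fin K) → A k) → S → ℝ)
    (γ : ℝ) (hγ0 : 0 ≤ γ) (hγ1 : γ < 1)
    (hPnn : ∀ s aj s', 0 ≤ P s aj s') (hPsum : ∀ s aj, ∑ s', P s aj s' = 1)
    (qd : S → ((k : Fin K) → A k) → ℝ)
    (hBellman : ∀ s aj, qd s aj
      = r s aj + γ * ∑ s', (P s aj s' * (⨆ aj' : (k : Fin K) → A k, qd s' aj')))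
    (π : S → (k : Fin K) → A k)
    (hopt : ∀ s, qd s (π s) = ⨆ aj : (k : Fin K) → A k, qd s aj)
    (qstar : (k : Fin K) → S → A k → ℝ)
    (hdef : ∀ k s a, qstar k s a = qd s (Function.update (π s) k a)) :
    ∀ (k : Fin K) (s : S) (a : A k),
      qstar k s a = r s (Function.update (π s) k a)
        + γ * ∑ s', (P s (Function.update (π s) k a) s' * (⨆ a' : A k, qstar k s' a')) :=
  stmt1_general r P γ qd hBellman π hopt qstar hdef
end

section
/- There exist K functions q^k satisfying the fixed-point equation of the optimistic team Bellman operator B_E (i.e., q^k(s,a^k) = r(s,a^k,a^{-k}) + γ E max_{a'} q^k(s',a') with a^n = argmax_{a^n} q^n(s,a^n) for n ≠ k) that are not equal to any q^{k,⋆} arising from a team optimal policy; in particular, greedy policies with respect to such q^k can form a strictly suboptimal Nash equilibrium. Concretely, for the 2-agent, 2-action one-shot matrix game with rewards r(α,α)=0, r(α,β)=r(β,α)=−1, r(β,β)=1, the functions q^1(α)=q^2(α)=0, q^1(β)=q^2(β)=−1 satisfy the fixed-point equation but the induced greedy joint action (α,α) has value 0 < 1 = max_ā q†(ā). -/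
/-- Sub-optimal Nash fixed points exist. In the 2-agent, 2-action one-shot
matrix game with r(α,α)=0, r(α,β)=r(β,α)=−1, r(β,β)=1 (α = `false`, β = `true`),
the functions q¹(α)=q²(α)=0, q¹(β)=q²(β)=−1 satisfy the B_E fixed-point equation
(q^k(a) = r(a, a^{-k}) with a^{-k} greedy for q^{-k}), yet the induced greedy joint
action (α,α) has value 0 strictly below the team optimum max_ā q†(ā) = 1. -/
theorem stmt3
    (r : Bool → Bool → ℝ) (q1 q2 : Bool → ℝ)
    (hr1 : r false false = 0) (hr2 : r false true = -1)
    (hr3 : r true false = -1) (hr4 : r true true = 1)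
    (hq1α : q1 false = 0) (hq1β : q1 true = -1)
    (hq2α : q2 false = 0) (hq2β : q2 true = -1) :
    -- α = false is the greedy action of each agent
    (∀ a, q2 a ≤ q2 false) ∧ (∀ a, q1 a ≤ q1 false) ∧
    -- B_E fixed-point equations with the other agent playing its greedy action α
    (∀ a, q1 a = r a false) ∧ (∀ a, q2 a = r false a) ∧
    -- the q^k differ from the factored optimal q^{k,⋆}(a) = q†(a, a^{-k,⋆})
    (q1 false ≠ r false true ∨ q1 true ≠ r true true) ∧
    -- the induced greedy joint action (α,α) is strictly suboptimal
    (r false false < ⨆ p : Bool × Bool, r p.1 p.2) ∧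
    (r false false = 0) ∧ ((⨆ p : Bool × Bool, r p.1 p.2) = 1) := by
  have hββ_max : ∀ p : Bool × Bool, r p.1 p.2 ≤ r true true := by
    simp only [Prod.forall, Bool.forall_bool, hr1, hr2, hr3, hr4]
    norm_num
  have hsup : (⨆ p : Bool × Bool, r p.1 p.2) = 1 :=
    hr4 ▸ ciSup_eq_of_forall_le_of_forall_lt_exists_gt hββ_max fun _ hw => ⟨(true, true), hw⟩
  refine ⟨?_, ?_, ?_, ?_, ?_, by rw [hsup, hr1]; norm_num, hr1, hsup⟩
  · simp only [Bool.forall_bool, hq2α, hq2β]; norm_num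
  · simp only [Bool.forall_bool, hq1α, hq1β]; norm_num
  · simp only [Bool.forall_bool, hq1α, hq1β, hr1, hr3, and_self]
  · simp only [Bool.forall_bool, hq2α, hq2β, hr1, hr2, and_self]
  · left; rw [hq1α, hr2]; norm_num
end

section
/- Any set of factored functions q^{k,⋆} arising from a team optimal policy satisfies: max_{a^k} q^{k,⋆}(s,a^k) = max_ā [ r(s,ā) + γ E max_{a'^k} q^{k,⋆}(s', a'^k) ] for every state s and agent k. -/
/-!
Since `π s` maximises `qd s`, moving only agent `k`'s action away from `π s` already reaches the
joint maximum, so `max_a qstar k s a = max qd s` at every state; substituting this into the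
Bellman optimality equation gives the claim.
-/

theorem iSup_update_eq_iSup_of_apply_eq_iSup {α ι : Type*} [ConditionallyCompleteLattice α]
    [DecidableEq ι] {A : ι → Type*} {f : (∀ i, A i) → α} (hf : BddAbove (Set.range f))
    {x : ∀ i, A i} (hx : f x = ⨆ y, f y) (i : ι) :
    ⨆ a : A i, f (Function.update x i a) = ⨆ y, f y := by
  have : Nonempty (A i) := ⟨x i⟩
  apply le_antisymm (ciSup_le fun a => le_ciSup hf _)
  calc ⨆ y, f y = f (Function.update x i (x i)) := by rw [Function.update_eq_self, hx]
    _ ≤ ⨆ a : A i, f (Function.update x i a) :=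
      le_ciSup (hf.mono (Set.range_comp_subset_range _ f)) (x i)

theorem stmt4_general
    {S : Type} [Fintype S]
    {K : ℕ} {A : Fin K → Type} [∀ k, Fintype (A k)]
    (r : S → ((k : Fin K) → A k) → ℝ)
    (P : S → ((k : Fin K) → A k) → S → ℝ)
    (γ : ℝ)
    (qd : S → ((k : Fin K) → A k) → ℝ)
    (hBellman : ∀ s aj, qd s aj
      = r s aj + γ * ∑ s', (P s aj s' * (⨆ aj' : (k : Fin K) → A k, qd s' aj')))
    (π : S → (k : Fin K) → A k)
    (hopt : ∀ s, qd s (π s) = ⨆ aj : (k : Fin K) → A k, qd s aj)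
    (qstar : (k : Fin K) → S → A k → ℝ)
    (hdef : ∀ k s a, qstar k s a = qd s (Function.update (π s) k a)) :
    ∀ (k : Fin K) (s : S),
      (⨆ a : A k, qstar k s a)
        = ⨆ aj : (k : Fin K) → A k,
            (r s aj + γ * ∑ s', (P s aj s' * (⨆ a' : A k, qstar k s' a'))) := by
  intro k s
  have max_qstar_eq_max_qd : ∀ s, ⨆ a : A k, qstar k s a = ⨆ aj, qd s aj := fun s => by
    simp only [hdef]
    exact iSup_update_eq_iSup_of_apply_eq_iSup (Set.finite_range _).bddAbove (hopt s) k
  simp_rw [max_qstar_eq_max_qd]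
  exact iSup_congr (hBellman s)

/-- Any set of factored functions q^{k,⋆} arising from a team optimal policy
satisfies max_{a^k} q^{k,⋆}(s,a^k) = max_ā [ r(s,ā) + γ E max_{a'^k} q^{k,⋆}(s', a'^k) ]
for every state s and agent k. -/
theorem stmt4
    {S : Type} [Fintype S] [Nonempty S]
    {K : ℕ} {A : Fin K → Type} [∀ k, Fintype (A k)] [∀ k, Nonempty (A k)]
    (r : S → ((k : Fin K) → A k) → ℝ)
    (P : S → ((k : Fin K) → A k) → S → ℝ)
    (γ : ℝ) (hγ0 : 0 ≤ γ) (hγ1 : γ < 1)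
    (hPnn : ∀ s aj s', 0 ≤ P s aj s') (hPsum : ∀ s aj, ∑ s', P s aj s' = 1)
    (qd : S → ((k : Fin K) → A k) → ℝ)
    (hBellman : ∀ s aj, qd s aj
      = r s aj + γ * ∑ s', (P s aj s' * (⨆ aj' : (k : Fin K) → A k, qd s' aj')))
    (π : S → (k : Fin K) → A k)
    (hopt : ∀ s, qd s (π s) = ⨆ aj : (k : Fin K) → A k, qd s aj)
    (qstar : (k : Fin K) → S → A k → ℝ)
    (hdef : ∀ k s a, qstar k s a = qd s (Function.update (π s) k a)) :
    ∀ (k : Fin K) (s : S),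
      (⨆ a : A k, qstar k s a)
        = ⨆ aj : (k : Fin K) → A k,
            (r s aj + γ * ∑ s', (P s aj s' * (⨆ a' : A k, qstar k s' a'))) :=
  stmt4_general r P γ qd hBellman π hopt qstar hdef
end

section
/- The set C_0^U = { (q^1,...,q^K) : q^k(s,a^k) ≤ max_{a^{-k}} q†(s,a^k,a^{-k}) for all k,s,a^k } is invariant under both operators B_E and B_I; consequently it is invariant under any number of applications of the random operator B_p. -/
open scoped Classical

section

variable {S : Type} [Fintype S] [Nonempty S]
  {K : ℕ} {A : Fin K → Type} [∀ k, Fintype (A k)] [∀ k, Nonempty (A k)]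

/-- The optimistic-exact team Bellman operator B_E: the other agents play the
greedy actions prescribed by the selector `g`. -/
noncomputable def BE (r : S → ((k : Fin K) → A k) → ℝ)
    (P : S → ((k : Fin K) → A k) → S → ℝ) (γ : ℝ)
    (g : ((k : Fin K) → S → A k → ℝ) → S → ((k : Fin K) → A k))
    (Q : (k : Fin K) → S → A k → ℝ) : (k : Fin K) → S → A k → ℝ :=
  fun k s a =>
    r s (Function.update (g Q s) k a)
      + γ * ∑ s', (P s (Function.update (g Q s) k a) s' * (⨆ a' : A k, Q k s' a'))

/-- The individual-optimism operator B_I. -/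
noncomputable def BI (r : S → ((k : Fin K) → A k) → ℝ)
    (P : S → ((k : Fin K) → A k) → S → ℝ) (γ : ℝ)
    (Q : (k : Fin K) → S → A k → ℝ) : (k : Fin K) → S → A k → ℝ :=
  fun k s a =>
    max (Q k s a)
      (⨆ b : (n : Fin K) → A n,
        (r s (Function.update b k a)
          + γ * ∑ s', (P s (Function.update b k a) s' * (⨆ a' : A k, Q k s' a'))))

/-- Apply a finite sequence of operators (`true` = B_E, `false` = B_I). -/
noncomputable def applySeq (r : S → ((k : Fin K) → A k) → ℝ)
    (P : S → ((k : Fin K) → A k) → S → ℝ) (γ : ℝ)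
    (g : ((k : Fin K) → S → A k → ℝ) → S → ((k : Fin K) → A k))
    (ops : List Bool) (Q : (k : Fin K) → S → A k → ℝ) :
    (k : Fin K) → S → A k → ℝ :=
  ops.foldr (fun b acc => if b then BE r P γ g acc else BI r P γ acc) Q

/-- The no-overestimation set C_0^U. -/
def C0U (qd : S → ((k : Fin K) → A k) → ℝ)
    (Q : (k : Fin K) → S → A k → ℝ) : Prop :=
  ∀ (k : Fin K) (s : S) (a : A k),
    Q k s a ≤ ⨆ b : (n : Fin K) → A n, qd s (Function.update b k a)

end

section

variable {S : Type} {K : ℕ} {A : Fin K → Type}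

noncomputable def backup [Fintype S] (r : S → ((k : Fin K) → A k) → ℝ)
    (P : S → ((k : Fin K) → A k) → S → ℝ) (γ : ℝ)
    (Q : (k : Fin K) → S → A k → ℝ) (k : Fin K) (s : S) (aj : (n : Fin K) → A n) : ℝ :=
  r s aj + γ * ∑ s', P s aj s' * ⨆ a' : A k, Q k s' a'

theorem BE_eq_backup [Fintype S] (r : S → ((k : Fin K) → A k) → ℝ)
    (P : S → ((k : Fin K) → A k) → S → ℝ) (γ : ℝ)
    (g : ((k : Fin K) → S → A k → ℝ) → S → ((k : Fin K) → A k))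
    (Q : (k : Fin K) → S → A k → ℝ) (k : Fin K) (s : S) (a : A k) :
    BE r P γ g Q k s a = backup r P γ Q k s (Function.update (g Q s) k a) :=
  rfl

theorem BI_eq_max_backup [Fintype S] (r : S → ((k : Fin K) → A k) → ℝ)
    (P : S → ((k : Fin K) → A k) → S → ℝ) (γ : ℝ)
    (Q : (k : Fin K) → S → A k → ℝ) (k : Fin K) (s : S) (a : A k) :
    BI r P γ Q k s a =
      max (Q k s a) (⨆ b : (n : Fin K) → A n, backup r P γ Q k s (Function.update b k a)) :=
  rfl

theorem applySeq_induction [Fintype S] (r : S → ((k : Fin K) → A k) → ℝ)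
    (P : S → ((k : Fin K) → A k) → S → ℝ) (γ : ℝ)
    (g : ((k : Fin K) → S → A k → ℝ) → S → ((k : Fin K) → A k))
    {p : ((k : Fin K) → S → A k → ℝ) → Prop}
    (hE : ∀ Q, p Q → p (BE r P γ g Q)) (hI : ∀ Q, p Q → p (BI r P γ Q))
    (ops : List Bool) {Q : (k : Fin K) → S → A k → ℝ} (hQ : p Q) :
    p (applySeq r P γ g ops Q) := by
  induction ops with
  | nil => exact hQ
  | cons b ops ih =>
    cases b
    · exact hI _ ih
    · exact hE _ ih

theorem le_iSup_update [∀ k, Fintype (A k)] (qd : S → ((k : Fin K) → A k) → ℝ) (s : S)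
    (k : Fin K) (a : A k) (b : (n : Fin K) → A n) :
    qd s (Function.update b k a) ≤ ⨆ b' : (n : Fin K) → A n, qd s (Function.update b' k a) :=
  le_ciSup (f := fun b' => qd s (Function.update b' k a)) (Finite.bddAbove_range _) b

namespace C0U

variable [∀ k, Fintype (A k)] [∀ k, Nonempty (A k)]
  {r : S → ((k : Fin K) → A k) → ℝ} {P : S → ((k : Fin K) → A k) → S → ℝ} {γ : ℝ}
  {qd : S → ((k : Fin K) → A k) → ℝ} {Q : (k : Fin K) → S → A k → ℝ}

theorem iSup_le (hQ : C0U qd Q) (k : Fin K) (s : S) :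
    ⨆ a : A k, Q k s a ≤ ⨆ aj : (n : Fin K) → A n, qd s aj :=
  ciSup_le fun a =>
    (hQ k s a).trans (ciSup_le fun _ => le_ciSup (Finite.bddAbove_range _) _)

variable [Fintype S]

/-- `qd` is the fixed point of the joint Bellman equation, whose continuation value
`⨆ aj, qd s' aj` dominates that of `Q`. -/
theorem backup_le (hγ0 : 0 ≤ γ) (hPnn : ∀ s aj s', 0 ≤ P s aj s')
    (hBellman : ∀ s aj, qd s aj
      = r s aj + γ * ∑ s', (P s aj s' * (⨆ aj' : (k : Fin K) → A k, qd s' aj')))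
    (hQ : C0U qd Q) (k : Fin K) (s : S) (aj : (n : Fin K) → A n) :
    backup r P γ Q k s aj ≤ qd s aj := by
  rw [hBellman, backup]
  gcongr with s' _
  · exact hPnn _ _ _
  · exact hQ.iSup_le k s'

theorem apply_BE (g : ((k : Fin K) → S → A k → ℝ) → S → ((k : Fin K) → A k))
    (hγ0 : 0 ≤ γ) (hPnn : ∀ s aj s', 0 ≤ P s aj s')
    (hBellman : ∀ s aj, qd s aj
      = r s aj + γ * ∑ s', (P s aj s' * (⨆ aj' : (k : Fin K) → A k, qd s' aj')))
    (hQ : C0U qd Q) : C0U qd (BE r P γ g Q) := fun k s a => by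
  rw [BE_eq_backup]
  exact (hQ.backup_le hγ0 hPnn hBellman k s _).trans (le_iSup_update qd s k a _)

theorem apply_BI (hγ0 : 0 ≤ γ) (hPnn : ∀ s aj s', 0 ≤ P s aj s')
    (hBellman : ∀ s aj, qd s aj
      = r s aj + γ * ∑ s', (P s aj s' * (⨆ aj' : (k : Fin K) → A k, qd s' aj')))
    (hQ : C0U qd Q) : C0U qd (BI r P γ Q) := fun k s a => by
  rw [BI_eq_max_backup]
  exact max_le (hQ k s a) <| ciSup_le fun b =>
    (hQ.backup_le hγ0 hPnn hBellman k s _).trans (le_iSup_update qd s k a b)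

end C0U

end

section

variable {S : Type} [Fintype S] [Nonempty S]
  {K : ℕ} {A : Fin K → Type} [∀ k, Fintype (A k)] [∀ k, Nonempty (A k)]

theorem stmt7_general
    (r : S → ((k : Fin K) → A k) → ℝ)
    (P : S → ((k : Fin K) → A k) → S → ℝ)
    (γ : ℝ) (hγ0 : 0 ≤ γ)
    (hPnn : ∀ s aj s', 0 ≤ P s aj s')
    (g : ((k : Fin K) → S → A k → ℝ) → S → ((k : Fin K) → A k))
    (qd : S → ((k : Fin K) → A k) → ℝ)
    (hBellman : ∀ s aj, qd s aj
      = r s aj + γ * ∑ s', (P s aj s' * (⨆ aj' : (k : Fin K) → A k, qd s' aj'))) :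
    ∀ (Q : (k : Fin K) → S → A k → ℝ), C0U qd Q →
      C0U qd (BE r P γ g Q) ∧ C0U qd (BI r P γ Q) ∧
      ∀ ops : List Bool, C0U qd (applySeq r P γ g ops Q) := fun _ hQ =>
  ⟨hQ.apply_BE g hγ0 hPnn hBellman, hQ.apply_BI hγ0 hPnn hBellman, fun ops =>
    applySeq_induction r P γ g (fun _ h => h.apply_BE g hγ0 hPnn hBellman)
      (fun _ h => h.apply_BI hγ0 hPnn hBellman) ops hQ⟩

/-- The set C_0^U is invariant under both B_E and B_I; consequently it is
invariant under any number of applications of the random operator B_p (i.e., under any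
finite sequence of applications of B_E and B_I). -/
theorem stmt7
    (r : S → ((k : Fin K) → A k) → ℝ)
    (P : S → ((k : Fin K) → A k) → S → ℝ)
    (γ : ℝ) (hγ0 : 0 ≤ γ) (hγ1 : γ < 1)
    (hPnn : ∀ s aj s', 0 ≤ P s aj s') (hPsum : ∀ s aj, ∑ s', P s aj s' = 1)
    (g : ((k : Fin K) → S → A k → ℝ) → S → ((k : Fin K) → A k))
    (hg : ∀ (Q : (k : Fin K) → S → A k → ℝ) (s : S) (n : Fin K) (a : A n),
      Q n s a ≤ Q n s (g Q s n))
    (qd : S → ((k : Fin K) → A k) → ℝ)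
    (hBellman : ∀ s aj, qd s aj
      = r s aj + γ * ∑ s', (P s aj s' * (⨆ aj' : (k : Fin K) → A k, qd s' aj'))) :
    ∀ (Q : (k : Fin K) → S → A k → ℝ), C0U qd Q →
      C0U qd (BE r P γ g Q) ∧ C0U qd (BI r P γ Q) ∧
      ∀ ops : List Bool, C0U qd (applySeq r P γ g ops Q) :=
  stmt7_general r P γ hγ0 hPnn g qd hBellman

end
end

section
/- For a sequence of N ≥ L independent coin tosses with probability of heads equal to 1−p, the probability that there exists a run of at least L consecutive heads equals 1 − β_{N,L} + (1−p)^L β_{N−L,L}, where β_{N,L} = Σ_{j=0}^{⌊N/(L+1)⌋} (−1)^j C(N−jL, j) ( p(1−p)^L )^j. -/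
open scoped Classical

/-- β_{N,L} = Σ_{j=0}^{⌊N/(L+1)⌋} (−1)^j C(N−jL, j) (p(1−p)^L)^j from Uspensky's formula. -/
noncomputable def uspenskyBeta (p : ℝ) (N L : ℕ) : ℝ :=
  ∑ j ∈ Finset.range (N / (L + 1) + 1),
    (-1 : ℝ) ^ j * ((N - j * L).choose j : ℝ) * (p * (1 - p) ^ L) ^ j

/-- The event that ω contains a run of at least L consecutive heads (`true`). -/
def hasRun (N L : ℕ) (ω : Fin N → Bool) : Prop :=
  ∃ m : ℕ, m + L ≤ N ∧ ∀ j : Fin N, m ≤ (j : ℕ) → (j : ℕ) < m + L → ω j = true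

/-!
Write `q N` for the probability of no run of `L` heads in `N` tosses and `x = p (1 - p) ^ L`.
A sequence of length `M + L + 1` has no run iff its first `M + L` tosses have none and it is not
a run-free sequence of length `M` followed by one tail and `L` heads; this last event has
probability `x q M` and lies inside the former one, so `q (M + L + 1) = q (M + L) - x q M`.
By Pascal's rule `β` obeys the same recurrence, and `β N = 1` for `N ≤ L`, so induction gives
`q (n + L) = β (n + L) - (1 - p) ^ L β n`.
-/

lemma sum_mul_castAdd_natAdd {α R : Type*} [Fintype α] [CommSemiring R] {m n : ℕ}
    (f : (Fin m → α) → R) (g : (Fin n → α) → R) :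
    ∑ ω : Fin (m + n) → α, f (fun i => ω (Fin.castAdd n i)) * g (fun i => ω (Fin.natAdd m i))
      = (∑ σ, f σ) * ∑ τ, g τ := by
  rw [Finset.sum_mul_sum, ← Fintype.sum_prod_type']
  exact Fintype.sum_equiv (Fin.appendEquiv m n).symm _ _ fun ω => rfl

noncomputable def pathWeight (p : ℝ) {N : ℕ} (ω : Fin N → Bool) : ℝ :=
  ∏ i, if ω i then 1 - p else p

lemma sum_pathWeight (p : ℝ) (N : ℕ) : ∑ ω : Fin N → Bool, pathWeight p ω = 1 := by
  calc ∑ ω : Fin N → Bool, pathWeight p ω = (∑ b : Bool, if b then 1 - p else p) ^ N :=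
        (Fintype.sum_pow (fun b : Bool => if b then 1 - p else p) N).symm
    _ = 1 := by simp

lemma pathWeight_castAdd_mul_natAdd (p : ℝ) {m n : ℕ} (ω : Fin (m + n) → Bool) :
    pathWeight p ω
      = pathWeight p (fun i => ω (Fin.castAdd n i)) * pathWeight p (fun i => ω (Fin.natAdd m i)) :=
  Fin.prod_univ_add _

def runPattern (L : ℕ) : Fin (L + 1) → Bool := Fin.cons false fun _ => true

lemma pathWeight_runPattern (p : ℝ) (L : ℕ) : pathWeight p (runPattern L) = p * (1 - p) ^ L := by
  simp [pathWeight, runPattern, Fin.prod_univ_succ]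

def hasRunWithin {N : ℕ} (M L : ℕ) (ω : Fin N → Bool) : Prop :=
  ∃ m : ℕ, m + L ≤ M ∧ ∀ j : Fin N, m ≤ (j : ℕ) → (j : ℕ) < m + L → ω j = true

section Runs

variable {N M L : ℕ}

lemma hasRunWithin.mono {M' : ℕ} {ω : Fin N → Bool} (h : hasRunWithin M L ω) (hM : M ≤ M') :
    hasRunWithin M' L ω :=
  let ⟨m, hm, hω⟩ := h
  ⟨m, hm.trans hM, hω⟩

lemma hasRun_castAdd_iff {K : ℕ} (ω : Fin (M + K) → Bool) :
    hasRun M L (fun i => ω (Fin.castAdd K i)) ↔ hasRunWithin M L ω := by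
  refine exists_congr fun m => and_congr_right fun hm =>
    ⟨fun h j hj hjm => ?_, fun h i hi him => ?_⟩
  · exact h ⟨j, by omega⟩ hj hjm
  · exact h _ hi him

lemma not_hasRunWithin_add {ω : Fin N → Bool} (hM : M < N) (hrun : ¬ hasRunWithin M L ω)
    (hfalse : ω ⟨M, hM⟩ = false) : ¬ hasRunWithin (M + L) L ω := by
  rintro ⟨m, hm, hω⟩
  by_cases hmM : m + L ≤ M
  · exact hrun ⟨m, hmM, hω⟩
  · simp [hω ⟨M, hM⟩ (by simp; omega) (by simp; omega)] at hfalse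

lemma natAdd_eq_runPattern_iff (ω : Fin (M + L + 1) → Bool) :
    (fun i : Fin (L + 1) => ω (Fin.natAdd M i)) = runPattern L ↔
      ω ⟨M, by omega⟩ = false ∧ ∀ j : Fin (M + L + 1), M < j → ω j = true := by
  rw [funext_iff, Fin.forall_fin_succ]
  refine and_congr (by simp [runPattern, Fin.natAdd]) ⟨fun h j hj => ?_, fun h i => ?_⟩
  · simpa [runPattern, Fin.ext_iff, Fin.natAdd, show M + (j - M - 1 + 1) = j by omega]
      using h ⟨j - M - 1, by omega⟩
  · simpa [runPattern] using h _ (by simp)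

lemma hasRun_add_succ_iff (ω : Fin (M + L + 1) → Bool) :
    hasRun (M + L + 1) L ω ↔ hasRunWithin (M + L) L ω ∨
      ¬ hasRunWithin M L ω ∧ (fun i : Fin (L + 1) => ω (Fin.natAdd M i)) = runPattern L := by
  rw [natAdd_eq_runPattern_iff]
  constructor
  · rintro ⟨m, hm, hω⟩
    by_cases hprefix : hasRunWithin (M + L) L ω
    · exact Or.inl hprefix
    have hmM : m = M + 1 := by
      by_contra hne
      exact hprefix ⟨m, by omega, hω⟩
    subst hmM
    have hsuffix : ∀ j : Fin (M + L + 1), M < j → ω j = true :=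
      fun j hj => hω j hj (by omega)
    refine Or.inr ⟨fun h => hprefix (h.mono (by omega)), ?_, hsuffix⟩
    by_contra htrue
    refine hprefix ⟨M, le_rfl, fun j hj hjL => ?_⟩
    rcases hj.lt_or_eq with hlt | heq
    · exact hsuffix j hlt
    · simpa [Fin.ext_iff, heq] using htrue
  · rintro (h | ⟨-, -, hsuffix⟩)
    · exact h.mono (by omega)
    · exact ⟨M + 1, by omega, fun j hj _ => hsuffix j hj⟩

end Runs

noncomputable def noRunProb (p : ℝ) (N L : ℕ) : ℝ :=
  ∑ ω : Fin N → Bool, if hasRun N L ω then 0 else pathWeight p ω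

section NoRunProb

variable (p : ℝ)

lemma noRunProb_of_lt {N L : ℕ} (h : N < L) : noRunProb p N L = 1 := by
  have hno : ∀ ω : Fin N → Bool, ¬ hasRun N L ω := fun ω ⟨m, hm, _⟩ => by omega
  simp only [noRunProb, hno, if_false, sum_pathWeight]

lemma noRunProb_self (L : ℕ) : noRunProb p L L = 1 - (1 - p) ^ L := by
  have hrun : ∀ ω : Fin L → Bool, hasRun L L ω ↔ ω = fun _ => true := fun ω =>
    ⟨fun ⟨m, hm, hω⟩ => funext fun j => hω j (by omega) (by omega),
      fun h => ⟨0, by omega, fun j _ _ => congrFun h j⟩⟩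
  have hpoint : ∀ ω : Fin L → Bool, (if hasRun L L ω then 0 else pathWeight p ω)
      = pathWeight p ω - if ω = (fun _ => true) then pathWeight p ω else 0 := fun ω => by
    by_cases h : ω = fun _ => true <;> simp [hrun, h]
  simp only [noRunProb, hpoint, Finset.sum_sub_distrib, sum_pathWeight, Finset.sum_ite_eq',
    Finset.mem_univ, if_true]
  simp [pathWeight]

lemma noRunProb_add_succ (M L : ℕ) :
    noRunProb p (M + L + 1) L = noRunProb p (M + L) L - p * (1 - p) ^ L * noRunProb p M L := by
  have hpoint : ∀ ω : Fin (M + L + 1) → Bool,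
      (if hasRun (M + L + 1) L ω then 0 else pathWeight p ω)
        = (if hasRun (M + L) L (fun i => ω (Fin.castAdd 1 i)) then 0
            else pathWeight p (fun i => ω (Fin.castAdd 1 i)))
              * pathWeight p (fun i => ω (Fin.natAdd (M + L) i))
          - (if hasRun M L (fun i => ω (Fin.castAdd (L + 1) i)) then 0
              else pathWeight p (fun i => ω (Fin.castAdd (L + 1) i)))
              * if (fun i : Fin (L + 1) => ω (Fin.natAdd M i)) = runPattern L
                then pathWeight p (fun i : Fin (L + 1) => ω (Fin.natAdd M i)) else 0 := fun ω => by
    simp only [hasRun_castAdd_iff, ite_mul, mul_ite, zero_mul, mul_zero,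
      ← pathWeight_castAdd_mul_natAdd]
    by_cases hB : hasRunWithin M L ω
    · simp [hasRun_add_succ_iff, hB, hB.mono (Nat.le_add_right M L)]
    by_cases hC : (fun i : Fin (L + 1) => ω (Fin.natAdd M i)) = runPattern L
    · have hA := not_hasRunWithin_add (by omega) hB ((natAdd_eq_runPattern_iff ω).mp hC).1
      simp [hasRun_add_succ_iff, hA, hB, hC]
    · simp [hasRun_add_succ_iff, hB, hC]
  have hsum₁ := sum_mul_castAdd_natAdd (m := M + L) (n := 1)
    (fun σ => if hasRun (M + L) L σ then 0 else pathWeight p σ) (pathWeight p)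
  have hsum₂ := sum_mul_castAdd_natAdd (m := M) (n := L + 1)
    (fun σ => if hasRun M L σ then 0 else pathWeight p σ)
    (fun τ => if τ = runPattern L then pathWeight p τ else 0)
  unfold noRunProb
  rw [Finset.sum_congr rfl fun ω _ => hpoint ω, Finset.sum_sub_distrib, hsum₁]
  -- `hsum₂` is over `Fin (M + (L + 1))`: defeq, but not syntactically equal, to `Fin (M + L + 1)`
  erw [hsum₂]
  rw [sum_pathWeight, Finset.sum_ite_eq', if_pos (Finset.mem_univ _), pathWeight_runPattern]
  ring

end NoRunProb

noncomputable def uspenskyTerm (p : ℝ) (N L j : ℕ) : ℝ :=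
  (-1 : ℝ) ^ j * ((N - j * L).choose j : ℝ) * (p * (1 - p) ^ L) ^ j

lemma uspenskyBeta_eq_sum_range {p : ℝ} {N L K : ℕ} (hK : N < K * (L + 1)) :
    uspenskyBeta p N L = ∑ j ∈ Finset.range K, uspenskyTerm p N L j := by
  have hsub : N / (L + 1) + 1 ≤ K := Nat.div_lt_of_lt_mul (by rwa [mul_comm])
  refine Finset.sum_subset (Finset.range_subset_range.mpr hsub) fun j _ hj => ?_
  rw [Finset.mem_range, not_lt, Nat.succ_le_iff] at hj
  have hNj : N < j * L + j := by
    rw [← mul_add_one]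
    exact (Nat.div_lt_iff_lt_mul (Nat.succ_pos L)).mp hj
  have hj0 : 0 < j := Nat.zero_lt_of_lt hj
  simp [Nat.choose_eq_zero_of_lt (show N - j * L < j by omega)]

lemma uspenskyBeta_of_le (p : ℝ) {N L : ℕ} (h : N ≤ L) : uspenskyBeta p N L = 1 := by
  simp [uspenskyBeta, Nat.div_eq_of_lt (Nat.lt_succ_of_le h)]

-- Truncated subtraction makes no exception here: if `M < j * L`, all three coefficients vanish.
lemma choose_add_succ_sub_mul (M L j : ℕ) :
    (M + L + 1 - (j + 1) * L).choose (j + 1)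
      = (M + L - (j + 1) * L).choose (j + 1) + (M - j * L).choose j := by
  rcases le_or_gt (j * L) M with h | h
  · rw [show M + L + 1 - (j + 1) * L = M - j * L + 1 by rw [add_one_mul]; omega,
      show M + L - (j + 1) * L = M - j * L by rw [add_one_mul]; omega, Nat.choose_succ_succ',
      add_comm]
  · obtain ⟨j, rfl⟩ : ∃ i, j = i + 1 := Nat.exists_eq_succ_of_ne_zero (by rintro rfl; simp at h)
    have hmul : (j + 1 + 1) * L = (j + 1) * L + L := add_one_mul _ _
    simp only [show M + L + 1 - (j + 1 + 1) * L = 0 by omega,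
      show M + L - (j + 1 + 1) * L = 0 by omega, show M - (j + 1) * L = 0 by omega,
      Nat.choose_zero_succ]

lemma uspenskyTerm_add_succ (p : ℝ) (M L j : ℕ) :
    uspenskyTerm p (M + L + 1) L (j + 1)
      = uspenskyTerm p (M + L) L (j + 1) - p * (1 - p) ^ L * uspenskyTerm p M L j := by
  simp only [uspenskyTerm, choose_add_succ_sub_mul, Nat.cast_add]
  ring

lemma uspenskyBeta_add_succ (p : ℝ) (M L : ℕ) :
    uspenskyBeta p (M + L + 1) L
      = uspenskyBeta p (M + L) L - p * (1 - p) ^ L * uspenskyBeta p M L := by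
  have hK : ∀ N ≤ M + L + 1, N < (M + L + 2) * (L + 1) := fun N hN => by nlinarith
  rw [uspenskyBeta_eq_sum_range (hK _ le_rfl), uspenskyBeta_eq_sum_range (hK _ (by omega)),
    uspenskyBeta_eq_sum_range (K := M + L + 1) (by nlinarith), Finset.sum_range_succ',
    Finset.sum_range_succ' (uspenskyTerm p (M + L) L), Finset.mul_sum]
  simp only [uspenskyTerm_add_succ, Finset.sum_sub_distrib]
  rw [show uspenskyTerm p (M + L + 1) L 0 = uspenskyTerm p (M + L) L 0 by simp [uspenskyTerm]]
  ring

lemma noRunProb_add_eq (p : ℝ) (L n : ℕ) :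
    noRunProb p (n + L) L = uspenskyBeta p (n + L) L - (1 - p) ^ L * uspenskyBeta p n L := by
  induction n using Nat.strong_induction_on with
  | _ n ih =>
  rcases n with _ | M
  · rw [zero_add, noRunProb_self, uspenskyBeta_of_le p le_rfl, uspenskyBeta_of_le p (Nat.zero_le L)]
    ring
  have hprev :
      noRunProb p (M + L) L = uspenskyBeta p (M + L) L - (1 - p) ^ L * uspenskyBeta p M L :=
    ih M M.lt_succ_self
  have hM : p * (1 - p) ^ L * noRunProb p M L = p * (1 - p) ^ L * uspenskyBeta p M L
      + (1 - p) ^ L * (uspenskyBeta p (M + 1) L - uspenskyBeta p M L) := by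
    rcases lt_or_ge M L with hML | hLM
    · rw [noRunProb_of_lt p hML, uspenskyBeta_of_le p hML.le, uspenskyBeta_of_le p hML]
      ring
    · obtain ⟨k, rfl⟩ := Nat.exists_eq_add_of_le' hLM
      rw [ih k (by omega), uspenskyBeta_add_succ]
      ring
  rw [show M + 1 + L = M + L + 1 by ring, noRunProb_add_succ, uspenskyBeta_add_succ, hprev, hM]
  ring

lemma sum_hasRun_pathWeight (p : ℝ) (N L : ℕ) :
    ∑ ω : Fin N → Bool, (if hasRun N L ω then pathWeight p ω else 0) = 1 - noRunProb p N L := by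
  rw [noRunProb, ← sum_pathWeight p N, ← Finset.sum_sub_distrib]
  refine Finset.sum_congr rfl fun ω _ => ?_
  split_ifs <;> ring

theorem stmt13_general
    (p : ℝ) (N L : ℕ) (hLN : L ≤ N) :
    (∑ ω : Fin N → Bool,
        (if hasRun N L ω then ∏ i : Fin N, (if ω i then 1 - p else p) else 0))
      = 1 - uspenskyBeta p N L + (1 - p) ^ L * uspenskyBeta p (N - L) L := by
  obtain ⟨n, rfl⟩ := Nat.exists_eq_add_of_le' hLN
  calc _ = 1 - noRunProb p (n + L) L := sum_hasRun_pathWeight p (n + L) L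
    _ = _ := by rw [noRunProb_add_eq, Nat.add_sub_cancel]; ring

/-- For N ≥ L independent coin tosses, each heads with probability 1−p,
the probability of a run of at least L consecutive heads equals
1 − β_{N,L} + (1−p)^L β_{N−L,L} (Uspensky's formula). -/
theorem stmt13
    (p : ℝ) (hp0 : 0 < p) (hp1 : p < 1) (N L : ℕ) (hL : 1 ≤ L) (hLN : L ≤ N) :
    (∑ ω : Fin N → Bool,
        (if hasRun N L ω then ∏ i : Fin N, (if ω i then 1 - p else p) else 0))
      = 1 - uspenskyBeta p N L + (1 - p) ^ L * uspenskyBeta p (N - L) L :=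
  stmt13_general p N L hLN
end

section
/- Fix δ₁ > 0 and let n₀ = ⌊ log_γ ( δ₁ / ( q_U − min_s max_ā q†(s,ā) ) ) ⌋. For any initial functions q^k, after N applications of the random operator B_p, P( B_p^N q^k(s,a^k) ≤ max_{a^{-k}} q†(s,a^k,a^{-k}) + δ₁ for all k,s,a^k ) ≥ 1 − Σ_{n=0}^{n₀} C(N,n) p^n (1−p)^{N−n}. -/
open scoped Classical

/-!
Write `V s = max_ā q†(s, ā)` (`maxJoint`) and `Vᵏ(s, a) = max_{a⁻ᵏ} q†(s, a, a⁻ᵏ) ≤ V s`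
(`maxOthers`). Because `q†` solves the Bellman optimality equation and the kernel is stochastic,
backing up any `q ≤ V + d` gives at most `q† + γ d`. So `B_E` turns `q ≤ V + d` into
`q ≤ Vᵏ + γ d`, while `B_I`, the maximum of its argument and such backups, keeps `q ≤ V + d`.
Starting from `q ≤ q_U = min_s V s + d₀ ≤ V + d₀`, a sequence with `n ≥ 1` applications of `B_E`
ends below `Vᵏ + γⁿ d₀`, which is at most `Vᵏ + δ₁` as soon as `n > n₀`. The sequences with at
most `n₀` applications of `B_E` have total probability at most `Σ_{n ≤ n₀} C(N,n) pⁿ (1−p)^{N−n}`.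
-/

open Finset

section Bernoulli

variable {ι : Type*} [Fintype ι] (p : ℝ)

noncomputable def bernoulliWeight (c : ι → Bool) : ℝ := ∏ i, if c i then p else 1 - p

theorem sum_bernoulliWeight [DecidableEq ι] : ∑ c : ι → Bool, bernoulliWeight p c = 1 := by
  simp only [bernoulliWeight]
  rw [← Fintype.prod_sum fun (_ : ι) (b : Bool) => if b then p else 1 - p]
  simp

theorem bernoulliWeight_nonneg (hp0 : 0 ≤ p) (hp1 : p ≤ 1) (c : ι → Bool) :
    0 ≤ bernoulliWeight p c :=
  prod_nonneg fun i _ => by split <;> linarith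

theorem bernoulliWeight_eq (c : ι → Bool) :
    bernoulliWeight p c
      = p ^ #{i | c i = true} * (1 - p) ^ (Fintype.card ι - #{i | c i = true}) := by
  have hcard := card_filter_add_card_filter_not (s := univ) fun i => c i = true
  rw [card_univ] at hcard
  rw [bernoulliWeight, prod_ite, prod_const, prod_const, ← hcard, Nat.add_sub_cancel_left]

theorem card_filter_card_true_eq_le [DecidableEq ι] (n : ℕ) :
    #{c : ι → Bool | #{i | c i = true} = n} ≤ (Fintype.card ι).choose n := by
  rw [← card_univ, ← card_powersetCard]
  refine card_le_card_of_injOn (fun c : ι → Bool => ({i | c i = true} : Finset ι))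
    (fun c hc => ?_) fun c _ c' _ h => ?_
  · simpa [mem_powersetCard] using hc
  · funext i
    simpa using congrArg (i ∈ ·) h

theorem sum_bernoulliWeight_card_true_le [DecidableEq ι] (hp0 : 0 ≤ p) (hp1 : p ≤ 1)
    (n₀ : ℕ) :
    ∑ c : ι → Bool with #{i | c i = true} ≤ n₀, bernoulliWeight p c
      ≤ ∑ n ∈ range (n₀ + 1),
          ((Fintype.card ι).choose n : ℝ) * p ^ n * (1 - p) ^ (Fintype.card ι - n) := by
  rw [← sum_fiberwise_of_maps_to (g := fun c => #{i | c i = true}) (t := range (n₀ + 1))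
    fun c hc => by simp only [mem_filter] at hc; simp [hc.2]]
  refine sum_le_sum fun n _ => ?_
  calc ∑ c ∈ {c : ι → Bool | #{i | c i = true} ≤ n₀} with #{i | c i = true} = n,
        bernoulliWeight p c
      ≤ ∑ c : ι → Bool with #{i | c i = true} = n, bernoulliWeight p c :=
        sum_le_sum_of_subset_of_nonneg (filter_subset_filter _ (subset_univ _))
          fun c _ _ => bernoulliWeight_nonneg p hp0 hp1 c
    _ = #{c : ι → Bool | #{i | c i = true} = n} * (p ^ n * (1 - p) ^ (Fintype.card ι - n)) := by
        rw [← nsmul_eq_mul, ← sum_const]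
        refine sum_congr rfl fun c hc => ?_
        rw [bernoulliWeight_eq, (mem_filter.mp hc).2]
    _ ≤ ((Fintype.card ι).choose n : ℝ) * p ^ n * (1 - p) ^ (Fintype.card ι - n) := by
        rw [mul_assoc]
        gcongr
        exact_mod_cast card_filter_card_true_eq_le n

theorem one_sub_sum_choose_le_sum_bernoulliWeight [DecidableEq ι] (hp0 : 0 ≤ p) (hp1 : p ≤ 1)
    (n₀ : ℕ) (good : (ι → Bool) → Prop) [DecidablePred good]
    (hgood : ∀ c, n₀ < #{i | c i = true} → good c) :
    1 - ∑ n ∈ range (n₀ + 1),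
          ((Fintype.card ι).choose n : ℝ) * p ^ n * (1 - p) ^ (Fintype.card ι - n)
      ≤ ∑ c, if good c then bernoulliWeight p c else 0 := by
  have hbad : ∑ c with ¬ good c, bernoulliWeight p c
      ≤ ∑ c with #{i | c i = true} ≤ n₀, bernoulliWeight p c :=
    sum_le_sum_of_subset_of_nonneg
      (fun c hc => by
        simp only [mem_filter, mem_univ, true_and] at hc ⊢
        exact not_lt.mp (mt (hgood c) hc))
      fun c _ _ => bernoulliWeight_nonneg p hp0 hp1 c
  have htotal := sum_filter_add_sum_filter_not univ good (bernoulliWeight p)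
  rw [sum_bernoulliWeight] at htotal
  rw [← sum_filter]
  linarith [sum_bernoulliWeight_card_true_le (ι := ι) p hp0 hp1 n₀]

end Bernoulli

section Bellman

variable {S : Type} {K : ℕ} {A : Fin K → Type}
  (r : S → ((k : Fin K) → A k) → ℝ) (P : S → ((k : Fin K) → A k) → S → ℝ) (γ : ℝ)
  (g : ((k : Fin K) → S → A k → ℝ) → S → ((k : Fin K) → A k))
  (qd : S → ((k : Fin K) → A k) → ℝ)

noncomputable def maxJoint (s : S) : ℝ := ⨆ aj : (k : Fin K) → A k, qd s aj

noncomputable def maxOthers (k : Fin K) (s : S) (a : A k) : ℝ :=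
  ⨆ b : (n : Fin K) → A n, qd s (Function.update b k a)

def IsBellmanOptimal [Fintype S] : Prop :=
  ∀ s aj, qd s aj = r s aj + γ * ∑ s', P s aj s' * maxJoint qd s'

theorem le_maxOthers [∀ k, Fintype (A k)] (k : Fin K) (s : S) (a : A k)
    (b : (n : Fin K) → A n) :
    qd s (Function.update b k a) ≤ maxOthers qd k s a :=
  le_ciSup (f := fun b : (n : Fin K) → A n => qd s (Function.update b k a))
    (Finite.bddAbove_range _) b

theorem maxOthers_le_maxJoint [∀ k, Fintype (A k)] [∀ k, Nonempty (A k)] (k : Fin K) (s : S)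
    (a : A k) :
    maxOthers qd k s a ≤ maxJoint qd s :=
  ciSup_le fun b => le_ciSup (Finite.bddAbove_range _) (Function.update b k a)

theorem backup_le_add [Fintype S] [∀ k, Nonempty (A k)] (hγ : 0 ≤ γ)
    (hPnn : ∀ s aj s', 0 ≤ P s aj s') (hPsum : ∀ s aj, ∑ s', P s aj s' = 1)
    (hBellman : IsBellmanOptimal r P γ qd) {q : (k : Fin K) → S → A k → ℝ} {d : ℝ}
    (hq : ∀ k s a, q k s a ≤ maxJoint qd s + d) (k : Fin K) (s : S) (aj : (k : Fin K) → A k) :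
    r s aj + γ * ∑ s', P s aj s' * (⨆ a', q k s' a') ≤ qd s aj + γ * d :=
  calc r s aj + γ * ∑ s', P s aj s' * (⨆ a', q k s' a')
      ≤ r s aj + γ * ∑ s', P s aj s' * (maxJoint qd s' + d) := by
        gcongr with s'
        · exact hPnn s aj s'
        · exact ciSup_le fun a' => hq k s' a'
    _ = r s aj + γ * ∑ s', P s aj s' * maxJoint qd s' + γ * d := by
        simp only [mul_add, sum_add_distrib, ← sum_mul, hPsum, one_mul, add_assoc]
    _ = qd s aj + γ * d := by rw [hBellman s aj]

variable [∀ k, Fintype (A k)] [∀ k, Nonempty (A k)]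

theorem BE_le_maxOthers_add [Fintype S] (hγ : 0 ≤ γ)
    (hPnn : ∀ s aj s', 0 ≤ P s aj s') (hPsum : ∀ s aj, ∑ s', P s aj s' = 1)
    (hBellman : IsBellmanOptimal r P γ qd)
    {q : (k : Fin K) → S → A k → ℝ} {d : ℝ}
    (hq : ∀ k s a, q k s a ≤ maxJoint qd s + d) (k : Fin K) (s : S) (a : A k) :
    BE r P γ g q k s a ≤ maxOthers qd k s a + γ * d :=
  (backup_le_add r P γ qd hγ hPnn hPsum hBellman hq k s _).trans
    (add_le_add (le_maxOthers qd k s a _) le_rfl)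

theorem BI_le_max [Fintype S] (hγ : 0 ≤ γ)
    (hPnn : ∀ s aj s', 0 ≤ P s aj s') (hPsum : ∀ s aj, ∑ s', P s aj s' = 1)
    (hBellman : IsBellmanOptimal r P γ qd)
    {q : (k : Fin K) → S → A k → ℝ} {d : ℝ}
    (hq : ∀ k s a, q k s a ≤ maxJoint qd s + d) (k : Fin K) (s : S) (a : A k) :
    BI r P γ q k s a ≤ max (q k s a) (maxOthers qd k s a + γ * d) :=
  max_le_max le_rfl <| ciSup_le fun b =>
    (backup_le_add r P γ qd hγ hPnn hPsum hBellman hq k s _).trans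
      (add_le_add (le_maxOthers qd k s a b) le_rfl)

theorem applySeq_le_maxJoint_add [Fintype S] (hγ0 : 0 ≤ γ) (hγ1 : γ ≤ 1)
    (hPnn : ∀ s aj s', 0 ≤ P s aj s') (hPsum : ∀ s aj, ∑ s', P s aj s' = 1)
    (hBellman : IsBellmanOptimal r P γ qd)
    {Q : (k : Fin K) → S → A k → ℝ} {d₀ : ℝ} (hd₀ : 0 ≤ d₀)
    (hQ : ∀ k s a, Q k s a ≤ maxJoint qd s + d₀) (l : List Bool) (k : Fin K) (s : S) (a : A k) :
    applySeq r P γ g l Q k s a ≤ maxJoint qd s + γ ^ l.count true * d₀ := by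
  induction l generalizing k s a with
  | nil => simpa [applySeq] using hQ k s a
  | cons b l ih =>
    cases b with
    | true =>
      calc BE r P γ g (applySeq r P γ g l Q) k s a
          ≤ maxOthers qd k s a + γ * (γ ^ l.count true * d₀) :=
            BE_le_maxOthers_add r P γ g qd hγ0 hPnn hPsum hBellman ih k s a
        _ ≤ maxJoint qd s + γ ^ (true :: l).count true * d₀ := by
            rw [List.count_cons_self, pow_succ', mul_assoc]
            exact add_le_add (maxOthers_le_maxJoint qd k s a) le_rfl
    | false =>
      refine (BI_le_max r P γ qd hγ0 hPnn hPsum hBellman ih k s a).trans (max_le ?_ ?_)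
      · simpa using ih k s a
      · simpa using add_le_add (maxOthers_le_maxJoint qd k s a)
          (mul_le_of_le_one_left (by positivity) hγ1)

theorem applySeq_le_maxOthers_add [Fintype S] (hγ0 : 0 ≤ γ) (hγ1 : γ ≤ 1)
    (hPnn : ∀ s aj s', 0 ≤ P s aj s') (hPsum : ∀ s aj, ∑ s', P s aj s' = 1)
    (hBellman : IsBellmanOptimal r P γ qd)
    {Q : (k : Fin K) → S → A k → ℝ} {d₀ : ℝ} (hd₀ : 0 ≤ d₀)
    (hQ : ∀ k s a, Q k s a ≤ maxJoint qd s + d₀) (l : List Bool) (hl : 0 < l.count true)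
    (k : Fin K) (s : S) (a : A k) :
    applySeq r P γ g l Q k s a ≤ maxOthers qd k s a + γ ^ l.count true * d₀ := by
  induction l generalizing k s a with
  | nil => simp at hl
  | cons b l ih =>
    have hl' := applySeq_le_maxJoint_add r P γ g qd hγ0 hγ1 hPnn hPsum hBellman hd₀ hQ l
    cases b with
    | true =>
      rw [List.count_cons_self, pow_succ', mul_assoc]
      exact BE_le_maxOthers_add r P γ g qd hγ0 hPnn hPsum hBellman hl' k s a
    | false =>
      simp only [List.count_cons] at hl ⊢
      refine (BI_le_max r P γ qd hγ0 hPnn hPsum hBellman hl' k s a).trans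
        (max_le (ih hl k s a) ?_)
      exact add_le_add le_rfl (mul_le_of_le_one_left (by positivity) hγ1)

end Bellman

theorem pow_floor_logb_add_one_le {γ x : ℝ} (hγ0 : 0 < γ) (hγ1 : γ < 1) (hx : 0 < x) :
    γ ^ (⌊Real.logb γ x⌋₊ + 1) ≤ x :=
  calc γ ^ (⌊Real.logb γ x⌋₊ + 1) = γ ^ ((⌊Real.logb γ x⌋₊ + 1 : ℕ) : ℝ) :=
        (Real.rpow_natCast _ _).symm
    _ ≤ γ ^ Real.logb γ x := Real.rpow_le_rpow_of_exponent_ge hγ0 hγ1.le <| by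
        push_cast
        exact (Nat.lt_floor_add_one _).le
    _ = x := Real.rpow_logb hγ0 hγ1.ne hx

theorem List.count_true_ofFn {N : ℕ} (c : Fin N → Bool) :
    (List.ofFn c).count true = #{i | c i = true} := by
  rw [← Multiset.coe_count, ← Fin.univ_val_map, Multiset.count_map, card_def, filter_val]
  congr 2
  ext
  exact eq_comm

section

variable {S : Type} [Fintype S] [Nonempty S]
  {K : ℕ} {A : Fin K → Type} [∀ k, Fintype (A k)] [∀ k, Nonempty (A k)]

theorem stmt14_general
    (r : S → ((k : Fin K) → A k) → ℝ)
    (P : S → ((k : Fin K) → A k) → S → ℝ)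
    (γ : ℝ) (hγ0 : 0 < γ) (hγ1 : γ < 1)
    (hPnn : ∀ s aj s', 0 ≤ P s aj s') (hPsum : ∀ s aj, ∑ s', P s aj s' = 1)
    (rmax : ℝ)
    (g : ((k : Fin K) → S → A k → ℝ) → S → ((k : Fin K) → A k))
    (qd : S → ((k : Fin K) → A k) → ℝ)
    (hBellman : ∀ s aj, qd s aj
      = r s aj + γ * ∑ s', (P s aj s' * (⨆ aj' : (k : Fin K) → A k, qd s' aj')))
    (Q : (k : Fin K) → S → A k → ℝ)
    (qU : ℝ)
    (hqU : qU = max (rmax / (1 - γ))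
      (⨆ k : Fin K, ⨆ s : S, ⨆ a : A k, Q k s a))
    (hqUgt : (⨅ s : S, ⨆ aj : (k : Fin K) → A k, qd s aj) < qU)
    (δ₁ : ℝ) (hδ₁ : 0 < δ₁)
    (p : ℝ) (hp0 : 0 < p) (hp1 : p ≤ 1)
    (n₀ : ℕ)
    (hn₀ : n₀ = ⌊Real.log (δ₁ / (qU - ⨅ s : S, ⨆ aj : (k : Fin K) → A k, qd s aj))
      / Real.log γ⌋₊)
    (N : ℕ) :
    1 - ∑ n ∈ Finset.range (n₀ + 1), (N.choose n : ℝ) * p ^ n * (1 - p) ^ (N - n)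
      ≤ ∑ c : Fin N → Bool,
          (if ∀ (k : Fin K) (s : S) (a : A k),
              applySeq r P γ g (List.ofFn c) Q k s a
                ≤ (⨆ b : (n : Fin K) → A n, qd s (Function.update b k a)) + δ₁
            then ∏ i : Fin N, (if c i then p else 1 - p) else 0) := by
  set m := ⨅ s, maxJoint qd s
  have hd₀ : 0 < qU - m := sub_pos.mpr hqUgt
  have hQ : ∀ k s a, Q k s a ≤ maxJoint qd s + (qU - m) := fun k s a => by
    have hQU : Q k s a ≤ qU := hqU ▸ le_max_of_le_right <|
      le_ciSup_of_le (Finite.bddAbove_range _) k <|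
        le_ciSup_of_le (Finite.bddAbove_range _) s <| le_ciSup (Finite.bddAbove_range _) a
    linarith [ciInf_le (Finite.bddBelow_range fun s => maxJoint qd s) s]
  have hγpow : γ ^ (n₀ + 1) * (qU - m) ≤ δ₁ := by
    rw [← le_div_iff₀ hd₀, hn₀, Real.log_div_log]
    exact pow_floor_logb_add_one_le hγ0 hγ1 (div_pos hδ₁ hd₀)
  have hgood : ∀ c : Fin N → Bool, n₀ < #{i | c i = true} → ∀ k s a,
      applySeq r P γ g (List.ofFn c) Q k s a ≤ maxOthers qd k s a + δ₁ := fun c hc k s a =>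
    calc applySeq r P γ g (List.ofFn c) Q k s a
        ≤ maxOthers qd k s a + γ ^ (List.ofFn c).count true * (qU - m) :=
          applySeq_le_maxOthers_add r P γ g qd hγ0.le hγ1.le hPnn hPsum hBellman hd₀.le hQ _
            (by rw [List.count_true_ofFn]; omega) k s a
      _ ≤ maxOthers qd k s a + γ ^ (n₀ + 1) * (qU - m) := by
          rw [List.count_true_ofFn]
          exact add_le_add le_rfl
            (mul_le_mul_of_nonneg_right (pow_le_pow_of_le_one hγ0.le hγ1.le hc) hd₀.le)
      _ ≤ maxOthers qd k s a + δ₁ := by linarith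
  have hprob := one_sub_sum_choose_le_sum_bernoulliWeight p hp0.le hp1 n₀ _ hgood
  rw [Fintype.card_fin] at hprob
  exact hprob

/-- Lemma 1: Fix δ₁ > 0 and let
n₀ = ⌊ log_γ ( δ₁ / ( q_U − min_s max_ā q†(s,ā) ) ) ⌋. For any initial functions q^k,
after N independent applications of the random operator B_p (B_E with probability p,
B_I with probability 1−p),
P( B_p^N q^k(s,a^k) ≤ max_{a^{-k}} q†(s,a^k,a^{-k}) + δ₁ ∀ k,s,a^k )
  ≥ 1 − Σ_{n=0}^{n₀} C(N,n) p^n (1−p)^{N−n}. -/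
theorem stmt14
    (r : S → ((k : Fin K) → A k) → ℝ)
    (P : S → ((k : Fin K) → A k) → S → ℝ)
    (γ : ℝ) (hγ0 : 0 < γ) (hγ1 : γ < 1)
    (hPnn : ∀ s aj s', 0 ≤ P s aj s') (hPsum : ∀ s aj, ∑ s', P s aj s' = 1)
    (rmax : ℝ) (hrmax : ∀ s aj, r s aj ≤ rmax)
    (g : ((k : Fin K) → S → A k → ℝ) → S → ((k : Fin K) → A k))
    (hg : ∀ (Q : (k : Fin K) → S → A k → ℝ) (s : S) (n : Fin K) (a : A n),
      Q n s a ≤ Q n s (g Q s n))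
    (qd : S → ((k : Fin K) → A k) → ℝ)
    (hBellman : ∀ s aj, qd s aj
      = r s aj + γ * ∑ s', (P s aj s' * (⨆ aj' : (k : Fin K) → A k, qd s' aj')))
    (Q : (k : Fin K) → S → A k → ℝ)
    (qU : ℝ)
    (hqU : qU = max (rmax / (1 - γ))
      (⨆ k : Fin K, ⨆ s : S, ⨆ a : A k, Q k s a))
    (hqUgt : (⨅ s : S, ⨆ aj : (k : Fin K) → A k, qd s aj) < qU)
    (δ₁ : ℝ) (hδ₁ : 0 < δ₁)
    (p : ℝ) (hp0 : 0 < p) (hp1 : p ≤ 1)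
    (n₀ : ℕ)
    (hn₀ : n₀ = ⌊Real.log (δ₁ / (qU - ⨅ s : S, ⨆ aj : (k : Fin K) → A k, qd s aj))
      / Real.log γ⌋₊)
    (N : ℕ) :
    1 - ∑ n ∈ Finset.range (n₀ + 1), (N.choose n : ℝ) * p ^ n * (1 - p) ^ (N - n)
      ≤ ∑ c : Fin N → Bool,
          (if ∀ (k : Fin K) (s : S) (a : A k),
              applySeq r P γ g (List.ofFn c) Q k s a
                ≤ (⨆ b : (n : Fin K) → A n, qd s (Function.update b k a)) + δ₁
            then ∏ i : Fin N, (if c i then p else 1 - p) else 0) :=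
  stmt14_general r P γ hγ0 hγ1 hPnn hPsum rmax g qd hBellman Q qU hqU hqUgt δ₁ hδ₁ p hp0 hp1 n₀ hn₀
    N

end
end
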